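/- Let F0∈ℝ and let ψ,u,ρ be smooth on {R>0}×ℝ_φ×ℝ_Z; set B := ((1/R)∂_Zψ)e_R+(F0/R)e_φ+(−(1/R)∂_Rψ)e_Z, v_pol := (−R∂_Zu)e_R+(R∂_Ru)e_Z, and w := Δ_pol u. Then B·( ρ (v_pol·∇v_pol) ) = (1/(2R)) ρ [R²|∇_pol u|², ψ] + ρRw[ψ,u], where |∇_pol u|² := (∂_Ru)²+(∂_Zu)². -/

import Mathlib

noncomputable section
set_option linter.unusedVariables false

open Real

/-- Scalar fields on the cylindrical domain, as functions of `(R, φ, Z)`. -/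
abbrev F3 := ℝ → ℝ → ℝ → ℝ

/-- Partial derivative in `R`. -/
def dR (f : F3) (R φ Z : ℝ) : ℝ := deriv (fun r => f r φ Z) R

/-- Partial derivative in `φ`. -/
def dP (f : F3) (R φ Z : ℝ) : ℝ := deriv (fun a => f R a Z) φ

/-- Partial derivative in `Z`. -/
def dZ (f : F3) (R φ Z : ℝ) : ℝ := deriv (fun z => f R φ z) Z

/-- Joint smoothness (C^∞) of a scalar field. -/
def Smooth3 (f : F3) : Prop :=
  ContDiff ℝ (⊤ : ℕ∞) fun q : ℝ × ℝ × ℝ => f q.1 q.2.1 q.2.2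

/-- Poisson bracket `[a,b] = ∂_R a ∂_Z b − ∂_Z a ∂_R b`. -/
def pb (a b : F3) (R φ Z : ℝ) : ℝ :=
  dR a R φ Z * dZ b R φ Z - dZ a R φ Z * dR b R φ Z

/-- Grad–Shafranov operator `Δ* f = R ∂_R((1/R) ∂_R f) + ∂_ZZ f`. -/
def GS (f : F3) (R φ Z : ℝ) : ℝ :=
  R * dR (fun r a z => (1 / r) * dR f r a z) R φ Z + dZ (dZ f) R φ Z

/-- Poloidal Laplacian `Δ_pol f = (1/R) ∂_R(R ∂_R f) + ∂_ZZ f`. -/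
def LapPol (f : F3) (R φ Z : ℝ) : ℝ :=
  (1 / R) * dR (fun r a z => r * dR f r a z) R φ Z + dZ (dZ f) R φ Z

/-- Cylindrical divergence `∇·F = (1/R)∂_R(R F_R) + (1/R)∂_φ F_φ + ∂_Z F_Z`. -/
def divC (FR Fφ FZ : F3) (R φ Z : ℝ) : ℝ :=
  (1 / R) * dR (fun r a z => r * FR r a z) R φ Z + (1 / R) * dP Fφ R φ Z + dZ FZ R φ Z

/-- Scalar advection `X·∇f = X_R ∂_R f + (X_φ/R) ∂_φ f + X_Z ∂_Z f`. -/
def advS (XvR XvP XvZ f : F3) (R φ Z : ℝ) : ℝ :=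
  XvR R φ Z * dR f R φ Z + XvP R φ Z / R * dP f R φ Z + XvZ R φ Z * dZ f R φ Z

/-- `e_R`-component of the vector advection `X·∇Y`. -/
def advVR (XvR XvP XvZ YvR YvP YvZ : F3) (R φ Z : ℝ) : ℝ :=
  advS XvR XvP XvZ YvR R φ Z - XvP R φ Z * YvP R φ Z / R

/-- `e_φ`-component of the vector advection `X·∇Y`. -/
def advVP (XvR XvP XvZ YvR YvP YvZ : F3) (R φ Z : ℝ) : ℝ :=
  advS XvR XvP XvZ YvP R φ Z + XvP R φ Z * YvR R φ Z / R

/-- `e_Z`-component of the vector advection `X·∇Y`. -/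
def advVZ (XvR XvP XvZ YvR YvP YvZ : F3) (R φ Z : ℝ) : ℝ :=
  advS XvR XvP XvZ YvZ R φ Z

/-- `e_R`-component of `B = (1/R)∇ψ×e_φ + (F0/R)e_φ`. -/
def BR (ψ : F3) : F3 := fun R φ Z => (1 / R) * dZ ψ R φ Z

/-- `e_φ`-component of the magnetic field. -/
def BP (F0 : ℝ) : F3 := fun R _ _ => F0 / R

/-- `e_Z`-component of the magnetic field. -/
def BZ (ψ : F3) : F3 := fun R φ Z => -(1 / R) * dR ψ R φ Z

/-- `e_R`-component of `v_pol = −R∇u×e_φ`. -/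
def vR (u : F3) : F3 := fun R φ Z => -R * dZ u R φ Z

/-- `e_Z`-component of `v_pol = −R∇u×e_φ`. -/
def vZ (u : F3) : F3 := fun R φ Z => R * dR u R φ Z

/-- The zero field. -/
def zeroF : F3 := fun _ _ _ => 0

/-- `|B|² = (F0² + (∂_Rψ)² + (∂_Zψ)²)/R²`. -/
def B2 (F0 : ℝ) (ψ : F3) : F3 := fun R φ Z =>
  (F0 ^ 2 + (dR ψ R φ Z) ^ 2 + (dZ ψ R φ Z) ^ 2) / R ^ 2

/-- `|B_pol|² = ((∂_Rψ)² + (∂_Zψ)²)/R²`. -/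
def Bpol2 (ψ : F3) : F3 := fun R φ Z => ((dR ψ R φ Z) ^ 2 + (dZ ψ R φ Z) ^ 2) / R ^ 2

/-- `ρ̂ = R²ρ`. -/
def rh (ρ : F3) : F3 := fun R φ Z => R ^ 2 * ρ R φ Z

/-- `∇_pol a · ∇_pol b`. -/
def gdot (a b : F3) : F3 := fun R φ Z =>
  dR a R φ Z * dR b R φ Z + dZ a R φ Z * dZ b R φ Z

/-- `e_R`-component of `v∥ B`. -/
def XR (ψ vpar : F3) : F3 := fun R φ Z => vpar R φ Z * BR ψ R φ Z

/-- `e_φ`-component of `v∥ B`. -/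
def XP (F0 : ℝ) (vpar : F3) : F3 := fun R φ Z => vpar R φ Z * BP F0 R φ Z

/-- `e_Z`-component of `v∥ B`. -/
def XZ (ψ vpar : F3) : F3 := fun R φ Z => vpar R φ Z * BZ ψ R φ Z

/-!
Since `v_pol` has no toroidal component, the `e_φ`-component of `v_pol·∇v_pol` vanishes, so `F0`
drops out, and the other two components only involve `R`-, `Z`-derivatives of
`v_R = -R ∂_Z u`, `v_Z = R ∂_R u`. Expanding these, the bracket `[R²|∇_pol u|², ψ]` and
`R Δ_pol u = ∂_R(R ∂_R u) + R ∂_ZZ u`, both sides become the same rational expression in `R`,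
`∂ψ` and the first and second derivatives of `u`. The identity is purely algebraic at that
point: the mixed partials `∂_R∂_Z u` and `∂_Z∂_R u` never have to be identified.
-/

def uncurry3 (f : F3) (q : ℝ × ℝ × ℝ) : ℝ := f q.1 q.2.1 q.2.2

namespace Smooth3

variable {f : F3}

theorem hasFDerivAt (hf : Smooth3 f) (R φ Z : ℝ) :
    HasFDerivAt (uncurry3 f) (fderiv ℝ (uncurry3 f) (R, φ, Z)) (R, φ, Z) :=
  (hf.differentiable (by simp) (R, φ, Z)).hasFDerivAt

theorem hasDerivAt_R (hf : Smooth3 f) (R φ Z : ℝ) :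
    HasDerivAt (fun r => f r φ Z) (fderiv ℝ (uncurry3 f) (R, φ, Z) (1, 0, 0)) R := by
  have h := (hf.hasFDerivAt R φ Z).comp_hasDerivAt R
    ((hasDerivAt_id R).prodMk ((hasDerivAt_const R φ).prodMk (hasDerivAt_const R Z)))
  exact h

theorem hasDerivAt_Z (hf : Smooth3 f) (R φ Z : ℝ) :
    HasDerivAt (fun z => f R φ z) (fderiv ℝ (uncurry3 f) (R, φ, Z) (0, 0, 1)) Z := by
  have h := (hf.hasFDerivAt R φ Z).comp_hasDerivAt Z
    ((hasDerivAt_const Z R).prodMk ((hasDerivAt_const Z φ).prodMk (hasDerivAt_id Z)))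
  exact h

theorem differentiableAt_R (hf : Smooth3 f) (R φ Z : ℝ) :
    DifferentiableAt ℝ (fun r => f r φ Z) R :=
  (hf.hasDerivAt_R R φ Z).differentiableAt

theorem differentiableAt_Z (hf : Smooth3 f) (R φ Z : ℝ) :
    DifferentiableAt ℝ (fun z => f R φ z) Z :=
  (hf.hasDerivAt_Z R φ Z).differentiableAt

theorem contDiff_fderiv_apply (hf : Smooth3 f) (v : ℝ × ℝ × ℝ) :
    ContDiff ℝ (⊤ : ℕ∞) fun q => fderiv ℝ (uncurry3 f) q v :=
  (contDiff_infty_iff_fderiv.mp hf).2.clm_apply contDiff_const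

protected theorem dR (hf : Smooth3 f) : Smooth3 (dR f) := by
  have h : uncurry3 (dR f) = fun q => fderiv ℝ (uncurry3 f) q (1, 0, 0) :=
    funext fun q => (hf.hasDerivAt_R q.1 q.2.1 q.2.2).deriv
  change ContDiff ℝ (⊤ : ℕ∞) (uncurry3 (dR f))
  exact h ▸ hf.contDiff_fderiv_apply (1, 0, 0)

protected theorem dZ (hf : Smooth3 f) : Smooth3 (dZ f) := by
  have h : uncurry3 (dZ f) = fun q => fderiv ℝ (uncurry3 f) q (0, 0, 1) :=
    funext fun q => (hf.hasDerivAt_Z q.1 q.2.1 q.2.2).deriv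
  change ContDiff ℝ (⊤ : ℕ∞) (uncurry3 (dZ f))
  exact h ▸ hf.contDiff_fderiv_apply (0, 0, 1)

end Smooth3

section PartialDerivatives

variable {R φ Z : ℝ} {f : F3}

theorem hasDerivAt_dR (h : DifferentiableAt ℝ (fun r => f r φ Z) R) :
    HasDerivAt (fun r => f r φ Z) (dR f R φ Z) R :=
  h.hasDerivAt

theorem hasDerivAt_dZ (h : DifferentiableAt ℝ (fun z => f R φ z) Z) :
    HasDerivAt (fun z => f R φ z) (dZ f R φ Z) Z :=
  h.hasDerivAt

theorem dR_radius_sq_mul {f' : ℝ} (hf : HasDerivAt (fun r => f r φ Z) f' R) :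
    dR (fun r a z => r ^ 2 * f r a z) R φ Z = 2 * R * f R φ Z + R ^ 2 * f' := by
  rw [dR, ((hasDerivAt_pow 2 R).fun_mul hf).deriv]
  push_cast
  ring

theorem dZ_radius_sq_mul :
    dZ (fun r a z => r ^ 2 * f r a z) R φ Z = R ^ 2 * dZ f R φ Z :=
  congrFun (deriv_const_mul_field' _) Z

end PartialDerivatives

section PoloidalVelocity

variable {R φ Z : ℝ} {u : F3}

theorem dR_vR (h : DifferentiableAt ℝ (fun r => dZ u r φ Z) R) :
    dR (vR u) R φ Z = -dZ u R φ Z - R * dR (dZ u) R φ Z :=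
  ((hasDerivAt_neg R).fun_mul (hasDerivAt_dR h)).deriv.trans (by ring)

theorem dZ_vR : dZ (vR u) R φ Z = -R * dZ (dZ u) R φ Z :=
  congrFun (deriv_const_mul_field' _) Z

theorem dR_vZ (h : DifferentiableAt ℝ (fun r => dR u r φ Z) R) :
    dR (vZ u) R φ Z = dR u R φ Z + R * dR (dR u) R φ Z :=
  ((hasDerivAt_id' R).fun_mul (hasDerivAt_dR h)).deriv.trans (by ring)

theorem dZ_vZ : dZ (vZ u) R φ Z = R * dZ (dR u) R φ Z :=
  congrFun (deriv_const_mul_field' _) Z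

theorem hasDerivAt_gdot_self_R (hR : DifferentiableAt ℝ (fun r => dR u r φ Z) R)
    (hZ : DifferentiableAt ℝ (fun r => dZ u r φ Z) R) :
    HasDerivAt (fun r => gdot u u r φ Z)
      (2 * (dR u R φ Z * dR (dR u) R φ Z + dZ u R φ Z * dR (dZ u) R φ Z)) R :=
  (((hasDerivAt_dR hR).fun_mul (hasDerivAt_dR hR)).fun_add
    ((hasDerivAt_dR hZ).fun_mul (hasDerivAt_dR hZ))).congr_deriv (by ring)

theorem dZ_gdot_self (hR : DifferentiableAt ℝ (fun z => dR u R φ z) Z)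
    (hZ : DifferentiableAt ℝ (fun z => dZ u R φ z) Z) :
    dZ (gdot u u) R φ Z
      = 2 * (dR u R φ Z * dZ (dR u) R φ Z + dZ u R φ Z * dZ (dZ u) R φ Z) :=
  (((hasDerivAt_dZ hR).fun_mul (hasDerivAt_dZ hR)).fun_add
    ((hasDerivAt_dZ hZ).fun_mul (hasDerivAt_dZ hZ))).deriv.trans (by ring)

theorem lapPol_eq_dR_vZ : LapPol u R φ Z = 1 / R * dR (vZ u) R φ Z + dZ (dZ u) R φ Z :=
  rfl

end PoloidalVelocity

section Advection

variable {R φ Z : ℝ} (XvR XvZ YvR YvP YvZ : F3)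

theorem advVR_of_toroidal_zero :
    advVR XvR zeroF XvZ YvR YvP YvZ R φ Z
      = XvR R φ Z * dR YvR R φ Z + XvZ R φ Z * dZ YvR R φ Z := by
  simp [advVR, advS, zeroF]

theorem advVP_of_toroidal_zero : advVP XvR zeroF XvZ YvR zeroF YvZ R φ Z = 0 := by
  simp [advVP, advS, zeroF, dR, dZ]

theorem advVZ_of_toroidal_zero :
    advVZ XvR zeroF XvZ YvR YvP YvZ R φ Z
      = XvR R φ Z * dR YvZ R φ Z + XvZ R φ Z * dZ YvZ R φ Z := by
  simp [advVZ, advS, zeroF]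

end Advection

theorem B_dot_poloidal_advection_general (F0 : ℝ) (ψ u ρ : F3) (hu : Smooth3 u) :
    ∀ R φ Z : ℝ, 0 < R →
      BR ψ R φ Z * (ρ R φ Z * advVR (vR u) zeroF (vZ u) (vR u) zeroF (vZ u) R φ Z)
        + BP F0 R φ Z * (ρ R φ Z * advVP (vR u) zeroF (vZ u) (vR u) zeroF (vZ u) R φ Z)
        + BZ ψ R φ Z * (ρ R φ Z * advVZ (vR u) zeroF (vZ u) (vR u) zeroF (vZ u) R φ Z)
      = (1 / (2 * R)) * ρ R φ Z * pb (fun r a z => r ^ 2 * gdot u u r a z) ψ R φ Z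
        + ρ R φ Z * R * LapPol u R φ Z * pb ψ u R φ Z := by
  intro R φ Z hR
  have huRR := hu.dR.differentiableAt_R R φ Z
  have huZR := hu.dZ.differentiableAt_R R φ Z
  have huRZ := hu.dR.differentiableAt_Z R φ Z
  have huZZ := hu.dZ.differentiableAt_Z R φ Z
  rw [advVR_of_toroidal_zero, advVP_of_toroidal_zero, advVZ_of_toroidal_zero, lapPol_eq_dR_vZ]
  simp only [pb]
  rw [dR_radius_sq_mul (hasDerivAt_gdot_self_R huRR huZR), dZ_radius_sq_mul,
    dZ_gdot_self huRZ huZZ, dR_vR huZR, dZ_vR, dR_vZ huRR, dZ_vZ]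
  simp only [BR, BZ, vR, vZ, gdot]
  field_simp
  ring

/-- `B·(ρ (v_pol·∇v_pol)) = (1/(2R))ρ[R²|∇_pol u|², ψ] + ρRw[ψ,u]`. -/
theorem B_dot_poloidal_advection (F0 : ℝ) (ψ u ρ : F3)
    (hψ : Smooth3 ψ) (hu : Smooth3 u) (hρ : Smooth3 ρ) :
    ∀ R φ Z : ℝ, 0 < R →
      BR ψ R φ Z * (ρ R φ Z * advVR (vR u) zeroF (vZ u) (vR u) zeroF (vZ u) R φ Z)
        + BP F0 R φ Z * (ρ R φ Z * advVP (vR u) zeroF (vZ u) (vR u) zeroF (vZ u) R φ Z)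
        + BZ ψ R φ Z * (ρ R φ Z * advVZ (vR u) zeroF (vZ u) (vR u) zeroF (vZ u) R φ Z)
      = (1 / (2 * R)) * ρ R φ Z * pb (fun r a z => r ^ 2 * gdot u u r a z) ψ R φ Z
        + ρ R φ Z * R * LapPol u R φ Z * pb ψ u R φ Z :=
  B_dot_poloidal_advection_general F0 ψ u ρ hu
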